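/- Let (K_{i(e)}, w_e, p_e)_{e∈E} be a contractive Markov system with average contracting rate 0 < a < 1 satisfying the standing assumptions, with invariant Borel probability measure μ, generalized Markov measure M and coding map F. Suppose C := ∑_{i=1}^N ∫_{K_i} d(x, x_i) dμ(x) < ∞ for some points x_i ∈ K_i. Let F be the sub-σ-algebra of B(Σ) generated by the coordinate maps σ ↦ σ_j for j ≤ 0. Then for every finite word (e_1,…,e_n) ∈ E^n, the conditional expectation with respect to M of the indicator of the cylinder {τ ∈ Σ : τ_1 = e_1, …, τ_n = e_n} given F satisfies, for M-a.e. σ ∈ Σ: E_M(1_{[e_1,…,e_n]} | F)(σ) = p_{e_1}(F(σ)) · p_{e_2}(w_{e_1}F(σ)) ⋯ p_{e_n}(w_{e_{n−1}} ∘ ⋯ ∘ w_{e_1} F(σ)). -/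

import Mathlib

open MeasureTheory Filter ENNReal

/-- The modulus of uniform continuity of a real-valued function on a
(pseudo)metric space, valued in `ℝ≥0∞`. -/
noncomputable def modulus {X : Type*} [PseudoMetricSpace X] (h : X → ℝ) (t : ℝ) : ℝ≥0∞ :=
  ⨆ (x : X) (y : X) (_ : dist x y ≤ t), ENNReal.ofReal |h x - h y|

/-- A function is Dini-continuous if `∫_0^c φ(t)/t dt < ∞` for some `c > 0`,
where `φ` is its modulus of uniform continuity. -/
def DiniContinuous {X : Type*} [PseudoMetricSpace X] (h : X → ℝ) : Prop :=
  ∃ c > (0 : ℝ), ∫⁻ t in Set.Ioc (0 : ℝ) c, modulus h t / ENNReal.ofReal t < ⊤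

/-- A Markov system on a metric space `K`, with vertex set `Fin N` and edge set `E`. -/
structure MarkovSystem (K : Type*) [MetricSpace K] [MeasurableSpace K]
    (N : ℕ) (E : Type*) [Fintype E] where
  /-- initial vertex of an edge -/
  edgeI : E → Fin N
  /-- terminal vertex of an edge -/
  edgeT : E → Fin N
  /-- the partition `K_1, …, K_N` of `K` -/
  Ki : Fin N → Set K
  Ki_nonempty : ∀ v, (Ki v).Nonempty
  Ki_measurable : ∀ v, MeasurableSet (Ki v)
  Ki_disjoint : ∀ v v', v ≠ v' → Disjoint (Ki v) (Ki v')
  Ki_cover : ∀ x : K, ∃ v, x ∈ Ki v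
  /-- the maps `w_e` -/
  w : E → K → K
  w_measurable : ∀ e, Measurable (w e)
  w_mapsTo : ∀ e, Set.MapsTo (w e) (Ki (edgeI e)) (Ki (edgeT e))
  /-- the probability functions `p_e` -/
  p : E → K → ℝ
  p_measurable : ∀ e, Measurable (p e)
  p_nonneg : ∀ e x, 0 ≤ p e x
  p_sum_one : ∀ x : K, ∑ e, p e x = 1
  p_eq_zero : ∀ e, ∀ x : K, x ∉ Ki (edgeI e) → p e x = 0

namespace MarkovSystem

variable {K : Type*} [MetricSpace K] [MeasurableSpace K] {N : ℕ} {E : Type*} [Fintype E]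

/-- Condition of contractiveness on average with rate `a`. -/
def ContractiveOnAvg (sys : MarkovSystem K N E) (a : ℝ) : Prop :=
  ∀ v : Fin N, ∀ x ∈ sys.Ki v, ∀ y ∈ sys.Ki v,
    ∑ e, sys.p e x * dist (sys.w e x) (sys.w e y) ≤ a * dist x y

/-- `μ` is an invariant Borel probability measure of the Markov system:
`∫ Uf dμ = ∫ f dμ` for every bounded Borel measurable `f`. -/
def IsInvariant (sys : MarkovSystem K N E) (μ : Measure K) : Prop :=
  IsProbabilityMeasure μ ∧
  ∀ f : K → ℝ, Measurable f → (∃ B, ∀ x, |f x| ≤ B) →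
    ∫ x, (∑ e, sys.p e x * f (sys.w e x)) ∂μ = ∫ x, f x ∂μ

end MarkovSystem

/-- `wordProb w p (e₁ :: … :: eₖ) x = p_{e₁}(x) p_{e₂}(w_{e₁}x) ⋯ p_{eₖ}(w_{e_{k-1}} ∘ ⋯ ∘ w_{e₁}x)`. -/
def wordProb {K E : Type*} (w : E → K → K) (p : E → K → ℝ) : List E → K → ℝ
  | [], _ => 1
  | e :: l, x => p e x * wordProb w p l (w e x)

/-- `wordMap w (e₁ :: … :: eₖ) = w_{eₖ} ∘ ⋯ ∘ w_{e₁}`. -/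
def wordMap {K E : Type*} (w : E → K → K) : List E → K → K
  | [], x => x
  | e :: l, x => wordMap w l (w e x)

/-- `M` is the generalized Markov measure on `Σ = E^ℤ` associated with the Markov
system and the invariant measure `μ`. -/
def IsMarkovMeasure {K : Type*} [MetricSpace K] [MeasurableSpace K] {N : ℕ}
    {E : Type*} [Fintype E] [MeasurableSpace E]
    (sys : MarkovSystem K N E) (μ : Measure K) (M : Measure (ℤ → E)) : Prop :=
  IsProbabilityMeasure M ∧
  ∀ (m : ℤ) (es : List E),
    M {σ : ℤ → E | ∀ j : Fin es.length, σ (m + (j : ℕ)) = es.get j}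
      = ENNReal.ofReal (∫ x, wordProb sys.w sys.p es x ∂μ)

/-- The left shift on `E^ℤ`. -/
def shift {E : Type*} (σ : ℤ → E) : ℤ → E := fun k => σ (k + 1)

/-- `comps w σ m = w_{σ₀} ∘ w_{σ₋₁} ∘ ⋯ ∘ w_{σ₋ₘ}`. -/
def comps {K E : Type*} (w : E → K → K) (σ : ℤ → E) : ℕ → K → K
  | 0 => w (σ 0)
  | n + 1 => fun x => comps w σ n (w (σ (-((n : ℤ) + 1))) x)

/-- `F` is the coding map of the contractive Markov system:
`F(σ) = lim_{m → -∞} w_{σ₀} ∘ ⋯ ∘ w_{σₘ} x_{i(σₘ)}` for `M`-a.e. `σ`. -/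
def IsCodingMap {K : Type*} [MetricSpace K] [MeasurableSpace K] {N : ℕ}
    {E : Type*} [Fintype E] [MeasurableSpace E]
    (sys : MarkovSystem K N E) (M : Measure (ℤ → E)) (F : (ℤ → E) → K) : Prop :=
  Measurable F ∧ ∃ xs : Fin N → K, (∀ v, xs v ∈ sys.Ki v) ∧
    ∀ᵐ σ ∂M, Filter.Tendsto
      (fun m : ℕ => comps sys.w σ m (xs (sys.edgeI (σ (-(m : ℤ))))))
      Filter.atTop (nhds (F σ))

/-- Entropy of the finite measurable partition given by the fibers of `π`. -/
noncomputable def partEntropy {Ω : Type*} [MeasurableSpace Ω] (M : Measure Ω)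
    {F : Type*} [Fintype F] (π : Ω → F) : ℝ :=
  -∑ f : F, ((M (π ⁻¹' {f})).toReal * Real.log (M (π ⁻¹' {f})).toReal)

/-- The Kolmogorov–Sinai entropy of a measure-preserving transformation `S`
with respect to `M`: the supremum over all finite measurable partitions `π` of
`inf_n (1/n) H(⋁_{i=0}^{n-1} S^{-i} π)`. -/
noncomputable def ksEntropy {Ω : Type*} [MeasurableSpace Ω] (M : Measure Ω) (S : Ω → Ω) : ℝ≥0∞ :=
  ⨆ (k : ℕ) (π : Ω → Fin k) (_ : ∀ j, MeasurableSet (π ⁻¹' {j})),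
    ⨅ n : ℕ, ENNReal.ofReal (((n : ℝ) + 1)⁻¹ *
      partEntropy M (fun ω => fun j : Fin (n + 1) => π (S^[(j : ℕ)] ω)))

/-- The sub-σ-algebra of `E^ℤ` generated by the coordinates `σ_j`, `j ≤ 0`. -/
def pastAlgebra (E : Type*) [MeasurableSpace E] : MeasurableSpace (ℤ → E) :=
  ⨆ (j : ℤ) (_ : j ≤ 0), MeasurableSpace.comap (fun σ : ℤ → E => σ j) inferInstance

/-!
Let `ψ = wordProb w p es`, and write `P_u = wordProb w p u`, `w_u = wordMap w u` for a word `u`.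
The approximants `ψ ∘ codingApprox k` of `ψ ∘ F` only read the coordinates `σ₋ₖ, …, σ₀`, so
`ψ ∘ F` is a.e. a limit of past-measurable functions, and by a π-system argument it suffices to
compare the integrals of `ψ ∘ F` and of `1_[es]` over the cylinders `s` of the past.

Split `s` into the cylinders `[u]` of the windows `u` of length `k + 1`. The cylinder formula for
`M` gives `∫_[u] 1_[es] dM = ∫ P_u(x) ψ(w_u x) dμ`, while `ψ ∘ codingApprox k` is the constant
`ψ(w_u y_u)` on `[u]`, where `y_u` is the base point of the initial piece of `u`. Each `p_e` is
uniformly continuous on its piece (Dini) and each `w_e` is `a/δ`-Lipschitz there, so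
`|ψ x' - ψ y'| ≤ ε + C d(x', y')` within every piece; the average contraction then bounds the
total error by `ε + C a^(k+1) ∫ d(x, y_x) dμ`, finite by the moment condition. Letting `k → ∞`,
with dominated convergence for `ψ ∘ codingApprox k → ψ ∘ F`, gives `∫_s ψ ∘ F dM = ∫_s 1_[es] dM`.
-/

open Set Topology

lemma lintegral_Ioc_inv_eq_top {c : ℝ} (hc : 0 < c) :
    ∫⁻ t in Ioc (0 : ℝ) c, (ENNReal.ofReal t)⁻¹ = ⊤ := by
  by_contra h
  have hint : IntegrableOn (fun t : ℝ => t⁻¹) (Ioc 0 c) := by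
    refine ⟨measurable_inv.aestronglyMeasurable, ?_⟩
    rw [hasFiniteIntegral_iff_norm, lt_top_iff_ne_top]
    convert h using 1
    refine setLIntegral_congr_fun measurableSet_Ioc fun t ht => ?_
    rw [Real.norm_eq_abs, abs_of_pos (inv_pos.2 ht.1), ENNReal.ofReal_inv_of_pos ht.1]
  have := (intervalIntegrable_iff_integrableOn_Ioc_of_le hc.le).2 hint
  simp only [intervalIntegrable_inv_iff, left_mem_uIcc, not_true_eq_false, or_false] at this
  exact hc.ne this

lemma DiniContinuous.uniformContinuous {X : Type*} [PseudoMetricSpace X] {h : X → ℝ}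
    (hh : DiniContinuous h) : UniformContinuous h := by
  obtain ⟨c, hc, hfin⟩ := hh
  rw [Metric.uniformContinuous_iff]
  by_contra! hbad
  obtain ⟨ε, hε, hfar⟩ := hbad
  have hmod : ∀ t ∈ Ioc (0 : ℝ) c, ENNReal.ofReal ε ≤ modulus h t := fun t ht => by
    obtain ⟨x, y, hxy, hε'⟩ := hfar t ht.1
    refine le_iSup_of_le x (le_iSup_of_le y (le_iSup_of_le hxy.le ?_))
    exact ENNReal.ofReal_le_ofReal (by rwa [← Real.dist_eq])
  have : ∫⁻ t in Ioc (0 : ℝ) c, ENNReal.ofReal ε / ENNReal.ofReal t = ⊤ := by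
    simp_rw [div_eq_mul_inv]
    rw [lintegral_const_mul' _ _ ENNReal.ofReal_ne_top, lintegral_Ioc_inv_eq_top hc,
      ENNReal.mul_top (by simpa using hε)]
  refine hfin.ne (eq_top_mono (setLIntegral_mono' measurableSet_Ioc fun t ht => ?_) this)
  exact ENNReal.div_le_div_right (hmod t ht) _

lemma UniformContinuousOn.mul_of_abs_le {X : Type*} [UniformSpace X] {f g : X → ℝ} {s : Set X}
    {B : ℝ} (hf : UniformContinuousOn f s) (hg : UniformContinuousOn g s)
    (hfB : ∀ x ∈ s, |f x| ≤ B) (hgB : ∀ x ∈ s, |g x| ≤ B) :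
    UniformContinuousOn (fun x => f x * g x) s := by
  have hmul : UniformContinuousOn (fun q : ℝ × ℝ => q.1 * q.2)
      (Metric.closedBall 0 B ×ˢ Metric.closedBall 0 B) :=
    ((isCompact_closedBall _ _).prod (isCompact_closedBall _ _)).uniformContinuousOn_of_continuous
      continuous_mul.continuousOn
  have hfg : UniformContinuousOn (fun x => (f x, g x)) s := by
    rw [uniformContinuousOn_iff_restrict] at hf hg ⊢
    exact hf.prodMk hg
  exact hmul.comp hfg fun x hx => ⟨by simpa using hfB x hx, by simpa using hgB x hx⟩

lemma UniformContinuousOn.exists_abs_sub_le_add_mul_dist {X : Type*} [PseudoMetricSpace X]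
    {f : X → ℝ} {s : Set X} {B : ℝ} (hf : UniformContinuousOn f s) (hB : ∀ x ∈ s, |f x| ≤ B)
    {ε : ℝ} (hε : 0 < ε) : ∃ C ≥ 0, ∀ x ∈ s, ∀ y ∈ s, |f x - f y| ≤ ε + C * dist x y := by
  obtain ⟨t, ht, hclose⟩ := Metric.uniformContinuousOn_iff_le.1 hf ε hε
  refine ⟨2 * |B| / t, by positivity, fun x hx y hy => ?_⟩
  rcases le_or_gt (dist x y) t with hd | hd
  · have := hclose x hx y hy hd
    rw [Real.dist_eq] at this
    have : 0 ≤ 2 * |B| / t * dist x y := by positivity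
    linarith
  · calc |f x - f y| ≤ 2 * |B| :=
          (abs_sub _ _).trans (by linarith [hB x hx, hB y hy, le_abs_self B])
      _ = 2 * |B| / t * t := by field_simp
      _ ≤ 2 * |B| / t * dist x y := by gcongr
      _ ≤ ε + 2 * |B| / t * dist x y := le_add_of_nonneg_left hε.le

lemma setIntegral_eq_of_isPiSystem {α F : Type*} [NormedAddCommGroup F] [NormedSpace ℝ F]
    {m m₀ : MeasurableSpace α} (hm : m ≤ m₀) {μ : Measure[m₀] α} {f g : α → F}
    (hf : Integrable f μ) (hg : Integrable g μ) {C : Set (Set α)}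
    (h_eq : m = MeasurableSpace.generateFrom C) (hC : IsPiSystem C) (h_univ : univ ∈ C)
    (basic : ∀ s ∈ C, ∫ x in s, f x ∂μ = ∫ x in s, g x ∂μ) {s : Set α}
    (hs : MeasurableSet[m] s) : ∫ x in s, f x ∂μ = ∫ x in s, g x ∂μ := by
  induction s, hs using MeasurableSpace.induction_on_inter h_eq hC with
  | empty => simp
  | basic s hs => exact basic s hs
  | compl s hs ih =>
    have h_int := basic univ h_univ
    rw [Measure.restrict_univ] at h_int
    rw [setIntegral_compl (hm s hs) hf, setIntegral_compl (hm s hs) hg, ih, h_int]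
  | iUnion s hdisj hs ih =>
    rw [integral_iUnion (fun i => hm _ (hs i)) hdisj hf.integrableOn,
      integral_iUnion (fun i => hm _ (hs i)) hdisj hg.integrableOn]
    exact tsum_congr ih

lemma aestronglyMeasurable_of_stronglyMeasurable_tendsto_ae {α β : Type*}
    [TopologicalSpace β] [TopologicalSpace.IsCompletelyMetrizableSpace β] [Nonempty β]
    {m m₀ : MeasurableSpace α} {μ : Measure[m₀] α} {f : ℕ → α → β} {g : α → β}
    (hf : ∀ n, StronglyMeasurable[m] (f n))
    (hlim : ∀ᵐ x ∂μ, Tendsto (fun n => f n x) atTop (𝓝 (g x))) :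
    AEStronglyMeasurable[m] g μ :=
  ⟨fun x => limUnder atTop (fun n => f n x), @StronglyMeasurable.limUnder _ _ _ m _ _ _ _ _ _ _ hf,
    hlim.mono fun _ hx => hx.limUnder_eq.symm⟩

section Words

variable {K E : Type*} (w : E → K → K) (p : E → K → ℝ)

lemma wordProb_append (l₁ l₂ : List E) (x : K) :
    wordProb w p (l₁ ++ l₂) x = wordProb w p l₁ x * wordProb w p l₂ (wordMap w l₁ x) := by
  induction l₁ generalizing x with
  | nil => exact (one_mul _).symm
  | cons e l ih => simp only [List.cons_append, wordProb, ih, wordMap, mul_assoc]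

lemma sum_wordProb_ofFn_succ_mul [Fintype E] (n : ℕ) (H : List E → ℝ) (x : K) :
    ∑ u : Fin (n + 1) → E, wordProb w p (List.ofFn u) x * H (List.ofFn u)
      = ∑ e, p e x *
          ∑ u : Fin n → E, wordProb w p (List.ofFn u) (w e x) * H (e :: List.ofFn u) := by
  rw [← (Fin.consEquiv fun _ => E).sum_comp, Fintype.sum_prod_type]
  simp only [Fin.consEquiv, Equiv.coe_fn_mk, List.ofFn_cons, wordProb, Finset.mul_sum, mul_assoc]

end Words

section Cylinders

variable {E : Type*}

def wordCylinder (m : ℤ) (l : List E) : Set (ℤ → E) :=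
  {σ | ∀ j : Fin l.length, σ (m + (j : ℕ)) = l.get j}

@[simp]
lemma wordCylinder_nil (m : ℤ) : wordCylinder m ([] : List E) = univ :=
  eq_univ_of_forall fun _ j => j.elim0

lemma wordCylinder_cons (m : ℤ) (e : E) (l : List E) :
    wordCylinder m (e :: l) = {σ | σ m = e} ∩ wordCylinder (m + 1) l := by
  ext σ
  simp only [wordCylinder, mem_ofPred_eq, mem_inter_iff, List.length_cons, Fin.forall_fin_succ,
    Fin.val_zero, Fin.val_succ, List.get_eq_getElem, List.getElem_cons_zero,
    List.getElem_cons_succ, Nat.cast_zero, add_zero, Nat.cast_succ, add_assoc, add_comm (1 : ℤ)]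

lemma wordCylinder_append (m : ℤ) (l₁ l₂ : List E) :
    wordCylinder m (l₁ ++ l₂) = wordCylinder m l₁ ∩ wordCylinder (m + l₁.length) l₂ := by
  induction l₁ generalizing m with
  | nil => simp
  | cons e l ih =>
    rw [List.cons_append, wordCylinder_cons, ih, wordCylinder_cons, inter_assoc, List.length_cons]
    push_cast
    ring_nf

lemma mem_wordCylinder_ofFn {m : ℤ} {n : ℕ} {u : Fin n → E} {σ : ℤ → E} :
    σ ∈ wordCylinder m (List.ofFn u) ↔ ∀ i : Fin n, σ (m + (i : ℕ)) = u i := by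
  simp [wordCylinder, Fin.forall_iff]

lemma eq_of_mem_wordCylinder {m : ℤ} {l l' : List E} {σ : ℤ → E} (h : σ ∈ wordCylinder m l)
    (h' : σ ∈ wordCylinder m l') (hlen : l.length = l'.length) : l = l' :=
  List.ext_get hlen fun j hj hj' => (h ⟨j, hj⟩).symm.trans (h' ⟨j, hj'⟩)

lemma measurableSet_wordCylinder [MeasurableSpace E] [MeasurableSingletonClass E]
    {mΩ : MeasurableSpace (ℤ → E)} {m : ℤ} {l : List E}
    (h : ∀ j : Fin l.length, Measurable[mΩ] fun σ : ℤ → E => σ (m + (j : ℕ))) :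
    MeasurableSet[mΩ] (wordCylinder m l) := by
  rw [wordCylinder, ofPred_forall]
  exact MeasurableSet.iInter fun j => h j (measurableSet_singleton _)

lemma integrable_indicator_wordCylinder [MeasurableSpace E] [MeasurableSingletonClass E]
    (M : Measure (ℤ → E)) [IsFiniteMeasure M] (m : ℤ) (l : List E) :
    Integrable ((wordCylinder m l).indicator fun _ => (1 : ℝ)) M :=
  (integrable_const 1).indicator (measurableSet_wordCylinder fun _ => measurable_pi_apply _)

lemma comps_eq_wordMap {K : Type*} (w : E → K → K) {σ : ℤ → E} {k : ℕ} {l : List E}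
    (hσ : σ ∈ wordCylinder (-k) l) (hl : l.length = k + 1) (z : K) :
    comps w σ k z = wordMap w l z := by
  induction k generalizing l z with
  | zero =>
    obtain ⟨e, rfl⟩ := List.length_eq_one_iff.1 hl
    simp only [Nat.cast_zero, neg_zero, wordCylinder_cons, wordCylinder_nil, inter_univ] at hσ
    simp [comps, wordMap, show σ 0 = e from hσ]
  | succ k ih =>
    obtain ⟨e, l, rfl⟩ := List.exists_cons_of_length_eq_add_one hl
    rw [wordCylinder_cons, Nat.cast_succ, neg_add, neg_add_cancel_right] at hσ
    obtain ⟨he : σ (-k + -1) = e, hσ⟩ := hσ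
    rw [← neg_add] at he
    simp only [comps, wordMap, he]
    exact ih hσ (by simpa using hl) _

def pastCylinder (l : List E) : Set (ℤ → E) := wordCylinder (1 - l.length) l

lemma pastCylinder_append_subset (l₁ l₂ : List E) :
    pastCylinder (l₁ ++ l₂) ⊆ pastCylinder l₂ := by
  rw [pastCylinder, wordCylinder_append, List.length_append]
  refine inter_subset_right.trans_eq ?_
  rw [pastCylinder]
  push_cast
  ring_nf

lemma pastCylinder_subset_of_nonempty {l l' : List E} (hlen : l.length ≤ l'.length)
    (hne : (pastCylinder l ∩ pastCylinder l').Nonempty) : pastCylinder l' ⊆ pastCylinder l := by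
  obtain ⟨σ, hσ, hσ'⟩ := hne
  obtain ⟨l₁, l₂, rfl, hl₂⟩ : ∃ l₁ l₂, l' = l₁ ++ l₂ ∧ l₂.length = l.length :=
    ⟨_, _, (List.take_append_drop (l'.length - l.length) l').symm, by simp; omega⟩
  have hσ₂ := pastCylinder_append_subset _ _ hσ'
  rw [pastCylinder, hl₂] at hσ₂
  exact eq_of_mem_wordCylinder hσ₂ hσ hl₂ ▸ pastCylinder_append_subset _ _

lemma isPiSystem_range_pastCylinder : IsPiSystem (range (pastCylinder (E := E))) := by
  rintro _ ⟨l, rfl⟩ _ ⟨l', rfl⟩ hne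
  rcases le_total l.length l'.length with h | h
  · exact ⟨l', (inter_eq_right.2 (pastCylinder_subset_of_nonempty h hne)).symm⟩
  · exact ⟨l, (inter_eq_left.2 (pastCylinder_subset_of_nonempty h (inter_comm _ _ ▸ hne))).symm⟩

def pastWindow (n : ℕ) (σ : ℤ → E) : Fin n → E := fun i => σ (1 - n + (i : ℕ))

lemma pastWindow_preimage_singleton (n : ℕ) (u : Fin n → E) :
    pastWindow n ⁻¹' {u} = pastCylinder (List.ofFn u) := by
  ext σ
  simp [pastCylinder, mem_wordCylinder_ofFn, pastWindow, funext_iff]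

lemma mem_pastCylinder_pastWindow (n : ℕ) (σ : ℤ → E) :
    σ ∈ pastCylinder (List.ofFn (pastWindow n σ)) := by
  rw [← pastWindow_preimage_singleton]
  rfl

end Cylinders

section PastAlgebra

variable {E : Type*} [MeasurableSpace E]

lemma pastAlgebra_le : pastAlgebra E ≤ MeasurableSpace.pi :=
  iSup₂_le fun j _ => (measurable_pi_apply j).comap_le

lemma measurable_pastAlgebra_apply {j : ℤ} (hj : j ≤ 0) :
    Measurable[pastAlgebra E] fun σ : ℤ → E => σ j :=
  measurable_iff_comap_le.2 (le_iSup₂_of_le j hj le_rfl)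

lemma measurable_pastWindow (n : ℕ) : Measurable[pastAlgebra E] (pastWindow (E := E) n) :=
  @measurable_pi_lambda _ _ _ (pastAlgebra E) _ _ fun _ => measurable_pastAlgebra_apply (by omega)

variable [MeasurableSingletonClass E]

lemma measurableSet_pastCylinder (l : List E) : MeasurableSet[pastAlgebra E] (pastCylinder l) :=
  measurableSet_wordCylinder fun _ => measurable_pastAlgebra_apply (by omega)

lemma pastAlgebra_eq_generateFrom [Finite E] :
    pastAlgebra E = MeasurableSpace.generateFrom (range (pastCylinder (E := E))) := by
  refine le_antisymm (iSup₂_le fun j hj => ?_)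
    (MeasurableSpace.generateFrom_le (forall_mem_range.2 measurableSet_pastCylinder))
  obtain ⟨n, rfl⟩ : ∃ n : ℕ, j = 1 - (n + 1 : ℕ) := ⟨(-j).toNat, by omega⟩
  have hwindow : Measurable[MeasurableSpace.generateFrom (range pastCylinder)]
      (pastWindow (E := E) (n + 1)) :=
    @measurable_to_countable' _ _ _ _ (MeasurableSpace.generateFrom _) _ fun u =>
      pastWindow_preimage_singleton (n + 1) u ▸
        MeasurableSpace.measurableSet_generateFrom (mem_range_self _)
  have h0 := (measurable_pi_apply 0).comp hwindow
  simp only [Function.comp_def, pastWindow, Fin.val_zero, Nat.cast_zero, add_zero] at h0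
  exact measurable_iff_comap_le.1 h0

lemma abs_setIntegral_pastCylinder_le [Fintype E] (M : Measure (ℤ → E)) {G : (ℤ → E) → ℝ}
    (hG : Integrable G M) {l : List E} {n : ℕ} (hn : l.length ≤ n) :
    |∫ σ in pastCylinder l, G σ ∂M|
      ≤ ∑ u : Fin n → E, |∫ σ in pastCylinder (List.ofFn u), G σ ∂M| := by
  have hsplit : pastCylinder l = ⋃ u, pastCylinder l ∩ pastWindow n ⁻¹' {u} := by
    rw [← inter_iUnion, ← preimage_iUnion, iUnion_of_singleton, preimage_univ, inter_univ]
  rw [hsplit, integral_iUnion_fintype (fun u => pastAlgebra_le _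
      ((measurableSet_pastCylinder l).inter (measurable_pastWindow n (measurableSet_singleton u))))
    (fun u u' h => (pairwise_disjoint_fiber _ h).mono inter_subset_right inter_subset_right)
    fun _ => hG.integrableOn]
  refine (Finset.abs_sum_le_sum_abs _ _).trans (Finset.sum_le_sum fun u _ => ?_)
  rw [pastWindow_preimage_singleton]
  -- each window cylinder lies inside `pastCylinder l` or is disjoint from it
  rcases (pastCylinder l ∩ pastCylinder (List.ofFn u)).eq_empty_or_nonempty with h | h
  · rw [h, Measure.restrict_empty, integral_zero_measure, abs_zero]
    exact abs_nonneg _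
  · rw [inter_eq_right.2 (pastCylinder_subset_of_nonempty (by simpa using hn) h)]

end PastAlgebra

namespace MarkovSystem

variable {K : Type*} [MetricSpace K] [MeasurableSpace K] {N : ℕ} {E : Type*} [Fintype E]
  (sys : MarkovSystem K N E) {a δ : ℝ}

lemma p_le_one (e : E) (x : K) : sys.p e x ≤ 1 :=
  sys.p_sum_one x ▸ Finset.single_le_sum (fun e' _ => sys.p_nonneg e' x) (Finset.mem_univ e)

lemma wordProb_nonneg (l : List E) (x : K) : 0 ≤ wordProb sys.w sys.p l x := by
  induction l generalizing x with
  | nil => exact zero_le_one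
  | cons e l ih => exact mul_nonneg (sys.p_nonneg e x) (ih _)

lemma wordProb_le_one (l : List E) (x : K) : wordProb sys.w sys.p l x ≤ 1 := by
  induction l generalizing x with
  | nil => exact le_rfl
  | cons e l ih => exact mul_le_one₀ (sys.p_le_one e x) (sys.wordProb_nonneg l _) (ih _)

lemma abs_wordProb_le_one (l : List E) (x : K) : |wordProb sys.w sys.p l x| ≤ 1 :=
  abs_le.2 ⟨by linarith [sys.wordProb_nonneg l x], sys.wordProb_le_one l x⟩

lemma measurable_wordMap (l : List E) : Measurable (wordMap sys.w l) := by
  induction l with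
  | nil => exact measurable_id
  | cons e l ih => exact ih.comp (sys.w_measurable e)

lemma measurable_wordProb (l : List E) : Measurable (wordProb sys.w sys.p l) := by
  induction l with
  | nil => exact measurable_const
  | cons e l ih => exact (sys.p_measurable e).mul (ih.comp (sys.w_measurable e))

lemma integrable_wordProb_comp {α : Type*} [MeasurableSpace α] {ν : Measure α}
    [IsFiniteMeasure ν] (l : List E) {φ : α → K} (hφ : Measurable φ) :
    Integrable (fun a => wordProb sys.w sys.p l (φ a)) ν :=
  .of_bound ((sys.measurable_wordProb l).comp hφ).aestronglyMeasurable 1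
    (ae_of_all _ fun a => sys.abs_wordProb_le_one l (φ a))

lemma sum_wordProb_ofFn (n : ℕ) (x : K) :
    ∑ u : Fin n → E, wordProb sys.w sys.p (List.ofFn u) x = 1 := by
  induction n generalizing x with
  | zero => simp [wordProb]
  | succ n ih =>
    simpa [ih, sys.p_sum_one] using sum_wordProb_ofFn_succ_mul sys.w sys.p n (fun _ => 1) x

lemma eq_of_mem_Ki {x : K} {v v' : Fin N} (h : x ∈ sys.Ki v) (h' : x ∈ sys.Ki v') : v = v' := by
  by_contra hne
  exact disjoint_left.1 (sys.Ki_disjoint v v' hne) h h'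

lemma mem_Ki_of_p_ne_zero {e : E} {x : K} (h : sys.p e x ≠ 0) : x ∈ sys.Ki (sys.edgeI e) := by
  by_contra hx
  exact h (sys.p_eq_zero e x hx)

lemma mem_Ki_of_wordProb_ofFn_ne_zero {n : ℕ} {u : Fin (n + 1) → E} {x : K}
    (h : wordProb sys.w sys.p (List.ofFn u) x ≠ 0) : x ∈ sys.Ki (sys.edgeI (u 0)) := by
  rw [List.ofFn_succ, wordProb] at h
  exact sys.mem_Ki_of_p_ne_zero (left_ne_zero_of_mul h)

lemma exists_mem_Ki_wordMap (l : List E) {v : Fin N} {x y : K} (hx : x ∈ sys.Ki v)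
    (hy : y ∈ sys.Ki v) (h : wordProb sys.w sys.p l x ≠ 0) :
    ∃ v', wordMap sys.w l x ∈ sys.Ki v' ∧ wordMap sys.w l y ∈ sys.Ki v' := by
  induction l generalizing v x y with
  | nil => exact ⟨v, hx, hy⟩
  | cons e l ih =>
    rw [wordProb] at h
    obtain rfl := sys.eq_of_mem_Ki hx (sys.mem_Ki_of_p_ne_zero (left_ne_zero_of_mul h))
    exact ih (sys.w_mapsTo e hx) (sys.w_mapsTo e hy) (right_ne_zero_of_mul h)

noncomputable def piece (x : K) : Fin N := (sys.Ki_cover x).choose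

lemma mem_Ki_piece (x : K) : x ∈ sys.Ki (sys.piece x) := (sys.Ki_cover x).choose_spec

lemma piece_eq_iff {x : K} {v : Fin N} : sys.piece x = v ↔ x ∈ sys.Ki v :=
  ⟨fun h => h ▸ sys.mem_Ki_piece x, sys.eq_of_mem_Ki (sys.mem_Ki_piece x)⟩

lemma measurable_piece : Measurable sys.piece :=
  measurable_to_countable' fun v => by
    simpa only [preimage, mem_singleton_iff, piece_eq_iff, ofPred_mem_eq] using sys.Ki_measurable v

lemma lipschitzOnWith_w (hcontr : sys.ContractiveOnAvg a) (hδpos : 0 < δ)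
    (hδ : ∀ e, ∀ x ∈ sys.Ki (sys.edgeI e), δ ≤ sys.p e x) (e : E) :
    LipschitzOnWith (a / δ).toNNReal (sys.w e) (sys.Ki (sys.edgeI e)) := by
  refine LipschitzOnWith.of_dist_le_mul fun x hx y hy => ?_
  have hδw : δ * dist (sys.w e x) (sys.w e y) ≤ a * dist x y :=
    calc δ * dist (sys.w e x) (sys.w e y) ≤ sys.p e x * dist (sys.w e x) (sys.w e y) := by
          gcongr; exact hδ e x hx
      _ ≤ ∑ e', sys.p e' x * dist (sys.w e' x) (sys.w e' y) :=
          Finset.single_le_sum (f := fun e' => sys.p e' x * dist (sys.w e' x) (sys.w e' y))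
            (fun e' _ => mul_nonneg (sys.p_nonneg e' x) dist_nonneg) (Finset.mem_univ e)
      _ ≤ a * dist x y := hcontr _ x hx y hy
  calc dist (sys.w e x) (sys.w e y) ≤ a / δ * dist x y := by
        rw [div_mul_eq_mul_div, le_div_iff₀ hδpos]; linarith
    _ ≤ _ := by gcongr; exact Real.le_coe_toNNReal _

lemma sum_wordProb_mul_dist_le (ha0 : 0 ≤ a) (hcontr : sys.ContractiveOnAvg a) (n : ℕ)
    {v : Fin N} {x y : K} (hx : x ∈ sys.Ki v) (hy : y ∈ sys.Ki v) :
    ∑ u : Fin n → E, wordProb sys.w sys.p (List.ofFn u) x *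
        dist (wordMap sys.w (List.ofFn u) x) (wordMap sys.w (List.ofFn u) y)
      ≤ a ^ n * dist x y := by
  induction n generalizing v x y with
  | zero => simp [wordProb, wordMap]
  | succ n ih =>
    rw [sum_wordProb_ofFn_succ_mul sys.w sys.p n
      (fun l => dist (wordMap sys.w l x) (wordMap sys.w l y))]
    calc ∑ e, sys.p e x * ∑ u : Fin n → E, wordProb sys.w sys.p (List.ofFn u) (sys.w e x) *
          dist (wordMap sys.w (List.ofFn u) (sys.w e x)) (wordMap sys.w (List.ofFn u) (sys.w e y))
        ≤ ∑ e, sys.p e x * (a ^ n * dist (sys.w e x) (sys.w e y)) := by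
          refine Finset.sum_le_sum fun e _ => ?_
          by_cases hp : sys.p e x = 0
          · simp [hp]
          obtain rfl := sys.eq_of_mem_Ki hx (sys.mem_Ki_of_p_ne_zero hp)
          exact mul_le_mul_of_nonneg_left (ih (sys.w_mapsTo e hx) (sys.w_mapsTo e hy))
            (sys.p_nonneg e x)
      _ = a ^ n * ∑ e, sys.p e x * dist (sys.w e x) (sys.w e y) := by
          rw [Finset.mul_sum]; exact Finset.sum_congr rfl fun e _ => by ring
      _ ≤ a ^ n * (a * dist x y) := by gcongr; exact hcontr v x hx y hy
      _ = a ^ (n + 1) * dist x y := by ring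

lemma uniformContinuousOn_wordProb (hcontr : sys.ContractiveOnAvg a) (hδpos : 0 < δ)
    (hδ : ∀ e, ∀ x ∈ sys.Ki (sys.edgeI e), δ ≤ sys.p e x)
    (hdini : ∀ e, DiniContinuous fun x : sys.Ki (sys.edgeI e) => sys.p e (x : K))
    (l : List E) (v : Fin N) : UniformContinuousOn (wordProb sys.w sys.p l) (sys.Ki v) := by
  induction l generalizing v with
  | nil => exact uniformContinuous_const.uniformContinuousOn
  | cons e l ih =>
    by_cases hv : v = sys.edgeI e
    · subst hv
      have hp : UniformContinuousOn (sys.p e) (sys.Ki (sys.edgeI e)) :=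
        uniformContinuousOn_iff_restrict.2 (hdini e).uniformContinuous
      have hw := (sys.lipschitzOnWith_w hcontr hδpos hδ e).uniformContinuousOn
      exact hp.mul_of_abs_le ((ih (sys.edgeT e)).comp hw (sys.w_mapsTo e))
        (fun x _ => abs_le.2 ⟨by linarith [sys.p_nonneg e x], sys.p_le_one e x⟩)
        fun x _ => sys.abs_wordProb_le_one l _
    · refine (uniformContinuous_const (b := (0 : ℝ))).uniformContinuousOn.congr fun x hx => ?_
      have : sys.p e x = 0 := sys.p_eq_zero e x fun hx' => hv (sys.eq_of_mem_Ki hx hx')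
      simp [wordProb, this]

lemma continuous_wordProb (hcontr : sys.ContractiveOnAvg a) (hδpos : 0 < δ)
    (hδ : ∀ e, ∀ x ∈ sys.Ki (sys.edgeI e), δ ≤ sys.p e x)
    (hdini : ∀ e, DiniContinuous fun x : sys.Ki (sys.edgeI e) => sys.p e (x : K))
    (hopen : ∀ v, IsOpen (sys.Ki v)) (l : List E) : Continuous (wordProb sys.w sys.p l) :=
  continuous_iff_continuousAt.2 fun x =>
    (sys.uniformContinuousOn_wordProb hcontr hδpos hδ hdini l _).continuousOn.continuousAt
      ((hopen _).mem_nhds (sys.mem_Ki_piece x))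

lemma exists_abs_wordProb_sub_le (hcontr : sys.ContractiveOnAvg a) (hδpos : 0 < δ)
    (hδ : ∀ e, ∀ x ∈ sys.Ki (sys.edgeI e), δ ≤ sys.p e x)
    (hdini : ∀ e, DiniContinuous fun x : sys.Ki (sys.edgeI e) => sys.p e (x : K))
    (l : List E) {ε : ℝ} (hε : 0 < ε) :
    ∃ C ≥ 0, ∀ v, ∀ x ∈ sys.Ki v, ∀ y ∈ sys.Ki v,
      |wordProb sys.w sys.p l x - wordProb sys.w sys.p l y| ≤ ε + C * dist x y := by
  choose C hC0 hC using fun v => (sys.uniformContinuousOn_wordProb hcontr hδpos hδ hdini l v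
    ).exists_abs_sub_le_add_mul_dist (fun x _ => sys.abs_wordProb_le_one l x) hε
  refine ⟨∑ v, C v, Finset.sum_nonneg fun v _ => hC0 v, fun v x hx y hy => ?_⟩
  refine (hC v x hx y hy).trans ?_
  gcongr
  exact Finset.single_le_sum (fun v _ => hC0 v) (Finset.mem_univ v)

section Estimate

variable {ψ : K → ℝ} {ε C : ℝ} {ys : Fin N → K}

lemma abs_wordProb_mul_sub_le
    (hψ : ∀ v, ∀ x ∈ sys.Ki v, ∀ y ∈ sys.Ki v, |ψ x - ψ y| ≤ ε + C * dist x y)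
    (hys : ∀ v, ys v ∈ sys.Ki v) {n : ℕ} (u : Fin (n + 1) → E) (x : K) :
    |wordProb sys.w sys.p (List.ofFn u) x * (ψ (wordMap sys.w (List.ofFn u) x)
        - ψ (wordMap sys.w (List.ofFn u) (ys (sys.edgeI (u 0)))))|
      ≤ wordProb sys.w sys.p (List.ofFn u) x * (ε + C * dist (wordMap sys.w (List.ofFn u) x)
          (wordMap sys.w (List.ofFn u) (ys (sys.piece x)))) := by
  rw [abs_mul, abs_of_nonneg (sys.wordProb_nonneg _ x)]
  by_cases h0 : wordProb sys.w sys.p (List.ofFn u) x = 0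
  · rw [h0, zero_mul, zero_mul]
  have hx := sys.mem_Ki_of_wordProb_ofFn_ne_zero h0
  rw [sys.piece_eq_iff.2 hx]
  obtain ⟨v, hxv, hyv⟩ := sys.exists_mem_Ki_wordMap _ hx (hys _) h0
  exact mul_le_mul_of_nonneg_left (hψ v _ hxv _ hyv) (sys.wordProb_nonneg _ x)

lemma sum_abs_wordProb_mul_sub_le (ha0 : 0 ≤ a) (hcontr : sys.ContractiveOnAvg a) (hC : 0 ≤ C)
    (hψ : ∀ v, ∀ x ∈ sys.Ki v, ∀ y ∈ sys.Ki v, |ψ x - ψ y| ≤ ε + C * dist x y)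
    (hys : ∀ v, ys v ∈ sys.Ki v) (n : ℕ) (x : K) :
    ∑ u : Fin (n + 1) → E, |wordProb sys.w sys.p (List.ofFn u) x *
        (ψ (wordMap sys.w (List.ofFn u) x)
          - ψ (wordMap sys.w (List.ofFn u) (ys (sys.edgeI (u 0)))))|
      ≤ ε + C * (a ^ (n + 1) * dist x (ys (sys.piece x))) := by
  refine (Finset.sum_le_sum fun u _ => sys.abs_wordProb_mul_sub_le hψ hys u x).trans ?_
  simp only [mul_add, Finset.sum_add_distrib, ← Finset.mul_sum, mul_left_comm _ C,
    ← Finset.sum_mul, sys.sum_wordProb_ofFn, one_mul]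
  gcongr
  exact sys.sum_wordProb_mul_dist_le ha0 hcontr _ (sys.mem_Ki_piece x) (hys _)

end Estimate

lemma lintegral_dist_piece (μ : Measure K) (xs : Fin N → K) :
    ∫⁻ x, ENNReal.ofReal (dist x (xs (sys.piece x))) ∂μ
      = ∑ v, ∫⁻ x in sys.Ki v, ENNReal.ofReal (dist x (xs v)) ∂μ := by
  have hcover : ⋃ v, sys.Ki v = univ := eq_univ_of_forall fun x => mem_iUnion.2 (sys.Ki_cover x)
  rw [← setLIntegral_univ, ← hcover, lintegral_iUnion sys.Ki_measurable
    (fun v v' h => sys.Ki_disjoint v v' h), tsum_fintype]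
  exact Finset.sum_congr rfl fun v _ =>
    setLIntegral_congr_fun (sys.Ki_measurable v) fun x hx => by rw [sys.piece_eq_iff.2 hx]

lemma integrable_dist_piece [BorelSpace K] (μ : Measure K) [IsFiniteMeasure μ] {xs : Fin N → K}
    (hfin : (∑ v, ∫⁻ x in sys.Ki v, ENNReal.ofReal (dist x (xs v)) ∂μ) < ⊤) (ys : Fin N → K) :
    Integrable (fun x => dist x (ys (sys.piece x))) μ := by
  have hmeas : ∀ zs : Fin N → K, Measurable fun x => dist x (zs (sys.piece x)) := fun zs =>
    (measurable_from_prod_countable_left (f := fun q : K × Fin N => dist q.1 (zs q.2))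
      fun v => (continuous_id.dist (continuous_const (y := zs v))).measurable).comp
        (measurable_id.prodMk sys.measurable_piece)
  have hxs : Integrable (fun x => dist x (xs (sys.piece x))) μ := by
    refine ⟨(hmeas xs).aestronglyMeasurable, ?_⟩
    rwa [hasFiniteIntegral_iff_ofReal (ae_of_all _ fun x => dist_nonneg), sys.lintegral_dist_piece]
  refine (hxs.add (integrable_const (∑ v, dist (xs v) (ys v)))).mono'
    (hmeas ys).aestronglyMeasurable (ae_of_all _ fun x => ?_)
  rw [Real.norm_eq_abs, abs_of_nonneg dist_nonneg]
  calc dist x (ys (sys.piece x))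
      ≤ dist x (xs (sys.piece x)) + dist (xs (sys.piece x)) (ys (sys.piece x)) :=
        dist_triangle _ _ _
    _ ≤ _ := add_le_add_right (Finset.single_le_sum (f := fun v => dist (xs v) (ys v))
          (fun v _ => dist_nonneg) (Finset.mem_univ _)) _

noncomputable def codingApprox (ys : Fin N → K) (k : ℕ) (σ : ℤ → E) : K :=
  comps sys.w σ k (ys (sys.edgeI (σ (-(k : ℤ)))))

lemma codingApprox_eq_of_mem (ys : Fin N → K) {k : ℕ} {u : Fin (k + 1) → E} {σ : ℤ → E}
    (hσ : σ ∈ pastCylinder (List.ofFn u)) :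
    sys.codingApprox ys k σ = wordMap sys.w (List.ofFn u) (ys (sys.edgeI (u 0))) := by
  have hσ' : σ ∈ wordCylinder (-k) (List.ofFn u) := by
    rw [pastCylinder, List.length_ofFn] at hσ
    convert hσ using 2
    push_cast
    ring
  have h0 : σ (-k) = u 0 := by simpa using mem_wordCylinder_ofFn.1 hσ' 0
  rw [codingApprox, h0, comps_eq_wordMap sys.w hσ' (List.length_ofFn ..)]

variable [MeasurableSpace E] {μ : Measure K} {M : Measure (ℤ → E)}

lemma measureReal_wordCylinder (hM : IsMarkovMeasure sys μ M) (m : ℤ) (l : List E) :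
    M.real (wordCylinder m l) = ∫ x, wordProb sys.w sys.p l x ∂μ := by
  rw [measureReal_def, show M (wordCylinder m l) = _ from hM.2 m l,
    ENNReal.toReal_ofReal (integral_nonneg fun x => sys.wordProb_nonneg l x)]

variable [MeasurableSingletonClass E]

lemma measurable_codingApprox (ys : Fin N → K) (k : ℕ) :
    Measurable[pastAlgebra E] (sys.codingApprox ys k) := by
  have : sys.codingApprox ys k = (fun u : Fin (k + 1) → E =>
      wordMap sys.w (List.ofFn u) (ys (sys.edgeI (u 0)))) ∘ pastWindow (k + 1) :=
    funext fun σ => sys.codingApprox_eq_of_mem ys (mem_pastCylinder_pastWindow _ σ)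
  rw [this]
  exact (measurable_of_countable _).comp (measurable_pastWindow _)

lemma integrable_wordProb_codingApprox [IsFiniteMeasure M] (l : List E) (ys : Fin N → K)
    (k : ℕ) : Integrable (fun σ => wordProb sys.w sys.p l (sys.codingApprox ys k σ)) M :=
  sys.integrable_wordProb_comp l ((sys.measurable_codingApprox ys k).mono pastAlgebra_le le_rfl)

lemma setIntegral_pastCylinder_indicator (hM : IsMarkovMeasure sys μ M) (l es : List E) :
    ∫ σ in pastCylinder l, (wordCylinder 1 es).indicator (fun _ => (1 : ℝ)) σ ∂M
      = ∫ x, wordProb sys.w sys.p (l ++ es) x ∂μ := by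
  have hmeas : MeasurableSet (wordCylinder 1 es) :=
    measurableSet_wordCylinder fun _ => measurable_pi_apply _
  have hcyl : wordCylinder 1 es ∩ pastCylinder l = wordCylinder (1 - l.length) (l ++ es) := by
    rw [wordCylinder_append, sub_add_cancel, inter_comm, pastCylinder]
  rw [integral_indicator_const _ hmeas, measureReal_restrict_apply hmeas, smul_eq_mul, mul_one,
    hcyl, sys.measureReal_wordCylinder hM]

lemma setIntegral_pastCylinder_sub_codingApprox (hM : IsMarkovMeasure sys μ M)
    [IsFiniteMeasure μ] [IsFiniteMeasure M] (ys : Fin N → K) (es : List E) {k : ℕ}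
    (u : Fin (k + 1) → E) :
    ∫ σ in pastCylinder (List.ofFn u), ((wordCylinder 1 es).indicator (fun _ => (1 : ℝ)) σ
        - wordProb sys.w sys.p es (sys.codingApprox ys k σ)) ∂M
      = ∫ x, wordProb sys.w sys.p (List.ofFn u) x *
          (wordProb sys.w sys.p es (wordMap sys.w (List.ofFn u) x)
            - wordProb sys.w sys.p es (wordMap sys.w (List.ofFn u) (ys (sys.edgeI (u 0))))) ∂μ := by
  have happrox : ∫ σ in pastCylinder (List.ofFn u), wordProb sys.w sys.p es
      (sys.codingApprox ys k σ) ∂M = M.real (pastCylinder (List.ofFn u)) *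
        wordProb sys.w sys.p es (wordMap sys.w (List.ofFn u) (ys (sys.edgeI (u 0)))) := by
    rw [setIntegral_congr_fun (pastAlgebra_le _ (measurableSet_pastCylinder _))
      fun σ hσ => by rw [sys.codingApprox_eq_of_mem ys hσ], setIntegral_const, smul_eq_mul]
  have hint : ∀ l : List E, Integrable (wordProb sys.w sys.p l) μ :=
    fun l => sys.integrable_wordProb_comp l measurable_id
  rw [integral_sub (integrable_indicator_wordCylinder M 1 es).restrict
      (sys.integrable_wordProb_codingApprox es ys k).restrict,
    sys.setIntegral_pastCylinder_indicator hM, happrox, pastCylinder,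
    sys.measureReal_wordCylinder hM, ← integral_mul_const,
    ← integral_sub (hint _) ((hint _).mul_const _)]
  congr 1 with x
  rw [wordProb_append]
  ring

lemma abs_setIntegral_pastCylinder_sub_codingApprox_le (ha0 : 0 ≤ a)
    (hcontr : sys.ContractiveOnAvg a) (hM : IsMarkovMeasure sys μ M) [IsProbabilityMeasure μ]
    [IsFiniteMeasure M] {ys : Fin N → K} (hys : ∀ v, ys v ∈ sys.Ki v)
    (hD : Integrable (fun x => dist x (ys (sys.piece x))) μ) (es : List E) {ε C : ℝ}
    (hC : 0 ≤ C) (hψ : ∀ v, ∀ x ∈ sys.Ki v, ∀ y ∈ sys.Ki v,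
      |wordProb sys.w sys.p es x - wordProb sys.w sys.p es y| ≤ ε + C * dist x y)
    {l : List E} {k : ℕ} (hk : l.length ≤ k + 1) :
    |∫ σ in pastCylinder l, ((wordCylinder 1 es).indicator (fun _ => (1 : ℝ)) σ
        - wordProb sys.w sys.p es (sys.codingApprox ys k σ)) ∂M|
      ≤ ε + C * (a ^ (k + 1) * ∫ x, dist x (ys (sys.piece x)) ∂μ) := by
  set T : (Fin (k + 1) → E) → K → ℝ := fun u x => wordProb sys.w sys.p (List.ofFn u) x *
    (wordProb sys.w sys.p es (wordMap sys.w (List.ofFn u) x)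
      - wordProb sys.w sys.p es (wordMap sys.w (List.ofFn u) (ys (sys.edgeI (u 0)))))
  have hT : ∀ u, Integrable (T u) μ := fun u =>
    .of_bound (((sys.measurable_wordProb _).mul (((sys.measurable_wordProb es).comp
      (sys.measurable_wordMap _)).sub measurable_const)).aestronglyMeasurable) 1
      (ae_of_all _ fun x => by
        rw [Real.norm_eq_abs, abs_mul]
        exact mul_le_one₀ (sys.abs_wordProb_le_one _ x) (abs_nonneg _)
          (abs_sub_le_of_nonneg_of_le (sys.wordProb_nonneg _ _) (sys.wordProb_le_one _ _)
            (sys.wordProb_nonneg _ _) (sys.wordProb_le_one _ _)))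
  have hint : Integrable (fun σ => (wordCylinder 1 es).indicator (fun _ => (1 : ℝ)) σ
      - wordProb sys.w sys.p es (sys.codingApprox ys k σ)) M :=
    (integrable_indicator_wordCylinder M 1 es).sub (sys.integrable_wordProb_codingApprox es ys k)
  refine (abs_setIntegral_pastCylinder_le M hint hk).trans ?_
  simp_rw [sys.setIntegral_pastCylinder_sub_codingApprox hM ys es]
  calc ∑ u, |∫ x, T u x ∂μ| ≤ ∑ u, ∫ x, |T u x| ∂μ :=
        Finset.sum_le_sum fun u _ => abs_integral_le_integral_abs
    _ = ∫ x, ∑ u, |T u x| ∂μ := (integral_finsetSum _ fun u _ => (hT u).abs).symm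
    _ ≤ ∫ x, (ε + C * (a ^ (k + 1) * dist x (ys (sys.piece x)))) ∂μ :=
        integral_mono_of_nonneg (ae_of_all _ fun x => Finset.sum_nonneg fun u _ => abs_nonneg _)
          ((integrable_const ε).add ((hD.const_mul _).const_mul C))
          (ae_of_all _ fun x => sys.sum_abs_wordProb_mul_sub_le ha0 hcontr hC hψ hys k x)
    _ = ε + C * (a ^ (k + 1) * ∫ x, dist x (ys (sys.piece x)) ∂μ) := by
        rw [integral_add (integrable_const ε) ((hD.const_mul _).const_mul C), integral_const,
          integral_const_mul, integral_const_mul, probReal_univ, one_smul]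

lemma tendsto_setIntegral_codingApprox_indicator (ha0 : 0 < a) (ha1 : a < 1)
    (hcontr : sys.ContractiveOnAvg a) (hM : IsMarkovMeasure sys μ M) [IsProbabilityMeasure μ]
    [IsFiniteMeasure M] {ys : Fin N → K} (hys : ∀ v, ys v ∈ sys.Ki v)
    (hD : Integrable (fun x => dist x (ys (sys.piece x))) μ) (es : List E)
    (hψ : ∀ ε > 0, ∃ C ≥ 0, ∀ v, ∀ x ∈ sys.Ki v, ∀ y ∈ sys.Ki v,
      |wordProb sys.w sys.p es x - wordProb sys.w sys.p es y| ≤ ε + C * dist x y)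
    (l : List E) :
    Tendsto (fun k => ∫ σ in pastCylinder l, wordProb sys.w sys.p es (sys.codingApprox ys k σ) ∂M)
      atTop (𝓝 (∫ σ in pastCylinder l, (wordCylinder 1 es).indicator (fun _ => (1 : ℝ)) σ ∂M)) := by
  rw [Metric.tendsto_atTop]
  intro ε hε
  obtain ⟨C, hC, hψC⟩ := hψ (ε / 2) (half_pos hε)
  set D := ∫ x, dist x (ys (sys.piece x)) ∂μ
  have htail : Tendsto (fun k : ℕ => C * (a ^ (k + 1) * D)) atTop (𝓝 0) := by
    simpa using ((tendsto_pow_atTop_nhds_zero_of_lt_one ha0.le ha1).comp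
      (tendsto_add_atTop_nat 1)).mul_const D |>.const_mul C
  obtain ⟨k₀, hk₀⟩ := (htail.eventually (gt_mem_nhds (half_pos hε))).exists_forall_of_atTop
  refine ⟨max k₀ l.length, fun k hk => ?_⟩
  rw [Real.dist_eq, abs_sub_comm, ← integral_sub (integrable_indicator_wordCylinder M 1 es).restrict
    (sys.integrable_wordProb_codingApprox es ys k).restrict]
  calc _ ≤ ε / 2 + C * (a ^ (k + 1) * D) :=
        sys.abs_setIntegral_pastCylinder_sub_codingApprox_le ha0.le hcontr hM hys hD es hC hψC
          (by omega)
    _ < ε / 2 + ε / 2 := by gcongr; exact hk₀ k (le_of_max_le_left hk)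
    _ = ε := add_halves ε

lemma tendsto_setIntegral_codingApprox_of_ae_tendsto {es : List E}
    (hcont : Continuous (wordProb sys.w sys.p es)) [IsFiniteMeasure M] {ys : Fin N → K}
    {F : (ℤ → E) → K}
    (hconv : ∀ᵐ σ ∂M, Tendsto (fun k => sys.codingApprox ys k σ) atTop (𝓝 (F σ)))
    (s : Set (ℤ → E)) :
    Tendsto (fun k => ∫ σ in s, wordProb sys.w sys.p es (sys.codingApprox ys k σ) ∂M)
      atTop (𝓝 (∫ σ in s, wordProb sys.w sys.p es (F σ) ∂M)) :=
  tendsto_integral_of_dominated_convergence (fun _ => 1)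
    (fun k => (sys.integrable_wordProb_codingApprox es ys k).aestronglyMeasurable.restrict)
    (integrable_const 1) (fun _ => ae_of_all _ fun _ => sys.abs_wordProb_le_one es _)
    (ae_restrict_of_ae (hconv.mono fun _ h => (hcont.tendsto _).comp h))

end MarkovSystem

theorem condexp_cylinder_eq_wordProb_coding_general
    {K : Type*} [MetricSpace K] [MeasurableSpace K] [BorelSpace K]
    {N : ℕ} {E : Type*} [Fintype E] [MeasurableSpace E] [MeasurableSingletonClass E]
    (sys : MarkovSystem K N E) (a : ℝ) (ha0 : 0 < a) (ha1 : a < 1)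
    (hcontr : sys.ContractiveOnAvg a)
    (hopen : ∀ v, IsOpen (sys.Ki v))
    (δ : ℝ) (hδpos : 0 < δ)
    (hδ : ∀ e, ∀ x ∈ sys.Ki (sys.edgeI e), δ ≤ sys.p e x)
    (hdini : ∀ e, DiniContinuous fun x : sys.Ki (sys.edgeI e) => sys.p e (x : K))
    (μ : Measure K) (hμ : sys.IsInvariant μ)
    (M : Measure (ℤ → E)) (hM : IsMarkovMeasure sys μ M)
    (F : (ℤ → E) → K) (hF : IsCodingMap sys M F)
    (xs : Fin N → K)
    (hfin : (∑ v : Fin N, ∫⁻ x in sys.Ki v, ENNReal.ofReal (dist x (xs v)) ∂μ) < ⊤)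
    (es : List E) :
    M[Set.indicator {σ : ℤ → E | ∀ j : Fin es.length, σ (1 + (j : ℕ)) = es.get j}
        (fun _ => (1 : ℝ)) | pastAlgebra E]
      =ᵐ[M] fun σ => wordProb sys.w sys.p es (F σ) := by
  obtain ⟨hFm, ys, hys, hconv⟩ := hF
  have := hμ.1
  have := hM.1
  have hcont := sys.continuous_wordProb hcontr hδpos hδ hdini hopen es
  have hf := integrable_indicator_wordCylinder M 1 es
  have hg := sys.integrable_wordProb_comp (ν := M) es hFm
  have hcyl : ∀ l, ∫ σ in pastCylinder l, wordProb sys.w sys.p es (F σ) ∂M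
      = ∫ σ in pastCylinder l, (wordCylinder 1 es).indicator (fun _ => (1 : ℝ)) σ ∂M :=
    fun l => tendsto_nhds_unique (sys.tendsto_setIntegral_codingApprox_of_ae_tendsto hcont hconv _)
      (sys.tendsto_setIntegral_codingApprox_indicator ha0 ha1 hcontr hM hys
        (sys.integrable_dist_piece μ hfin ys) es
        (fun _ hε => sys.exists_abs_wordProb_sub_le hcontr hδpos hδ hdini es hε) l)
  have hpast : ∀ s, MeasurableSet[pastAlgebra E] s → ∫ σ in s, wordProb sys.w sys.p es (F σ) ∂M
      = ∫ σ in s, (wordCylinder 1 es).indicator (fun _ => (1 : ℝ)) σ ∂M := fun s hs =>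
    setIntegral_eq_of_isPiSystem pastAlgebra_le hg hf pastAlgebra_eq_generateFrom
      isPiSystem_range_pastCylinder ⟨[], by simp [pastCylinder]⟩ (forall_mem_range.2 hcyl) hs
  have hgm : AEStronglyMeasurable[pastAlgebra E] (fun σ => wordProb sys.w sys.p es (F σ)) M :=
    aestronglyMeasurable_of_stronglyMeasurable_tendsto_ae
      (fun k => ((sys.measurable_wordProb es).comp
        (sys.measurable_codingApprox ys k)).stronglyMeasurable)
      (hconv.mono fun _ h => (hcont.tendsto _).comp h)
  exact (ae_eq_condExp_of_forall_setIntegral_eq pastAlgebra_le hf (fun s _ _ => hg.integrableOn)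
    (fun s hs _ => hpast s hs) hgm).symm

/-- Main lemma: for every finite word `(e₁, …, eₙ)`, the conditional expectation of
the indicator of the cylinder `{τ : τ₁ = e₁, …, τₙ = eₙ}` given the past coordinates
equals `σ ↦ p_{e₁}(F σ) p_{e₂}(w_{e₁} F σ) ⋯ p_{eₙ}(w_{e_{n-1}} ∘ ⋯ ∘ w_{e₁} F σ)`
`M`-almost everywhere. -/
theorem condexp_cylinder_eq_wordProb_coding
    {K : Type*} [MetricSpace K] [MeasurableSpace K] [BorelSpace K]
    {N : ℕ} {E : Type*} [Fintype E] [MeasurableSpace E] [MeasurableSingletonClass E]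
    (sys : MarkovSystem K N E) (a : ℝ) (ha0 : 0 < a) (ha1 : a < 1)
    (hcontr : sys.ContractiveOnAvg a)
    (hrelcpt : ∀ s : Set K, Bornology.IsBounded s → IsCompact (closure s))
    (hopen : ∀ v, IsOpen (sys.Ki v))
    (δ : ℝ) (hδpos : 0 < δ)
    (hδ : ∀ e, ∀ x ∈ sys.Ki (sys.edgeI e), δ ≤ sys.p e x)
    (hdini : ∀ e, DiniContinuous fun x : sys.Ki (sys.edgeI e) => sys.p e (x : K))
    (hsurj : Function.Surjective sys.edgeI)
    (μ : Measure K) (hμ : sys.IsInvariant μ)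
    (M : Measure (ℤ → E)) (hM : IsMarkovMeasure sys μ M)
    (F : (ℤ → E) → K) (hF : IsCodingMap sys M F)
    (xs : Fin N → K) (hxs : ∀ v, xs v ∈ sys.Ki v)
    (hfin : (∑ v : Fin N, ∫⁻ x in sys.Ki v, ENNReal.ofReal (dist x (xs v)) ∂μ) < ⊤)
    (es : List E) :
    M[Set.indicator {σ : ℤ → E | ∀ j : Fin es.length, σ (1 + (j : ℕ)) = es.get j}
        (fun _ => (1 : ℝ)) | pastAlgebra E]
      =ᵐ[M] fun σ => wordProb sys.w sys.p es (F σ) :=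
  condexp_cylinder_eq_wordProb_coding_general sys a ha0 ha1 hcontr hopen δ hδpos hδ hdini μ hμ M hM
    F hF xs hfin es
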